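/- arXiv:2510.13648 — 3 statements merged into one kernel-verified Lean document; each statement's English description precedes it below -/
import Mathlib

section
/- Let (a_n)_{n≥1} be nonnegative reals with Σ a_n z^n having radius of convergence R_a, and let R with 0 < R < R_a satisfy Σ_{n≥1} a_n R^n = 1. If gcd of the support {n : a_n > 0} is 1, then for every complex z with |z| ≤ R and z ≠ R we have Σ_{n≥1} a_n z^n ≠ 1. -/
/-- Aperiodicity of the support of a nonnegative sequence `a` with `A(R) = 1`, `R` strictly
inside the disc of convergence, implies `A(z) ≠ 1` for every `z` in the closed disc of
radius `R` other than `R` itself. -/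
theorem stmt1 (a : ℕ → ℝ) (R : ℝ)
    (ha0 : a 0 = 0) (ha : ∀ n, 0 ≤ a n)
    (hR : 0 < R)
    (hRa : ∃ R' : ℝ, R < R' ∧ Summable (fun n => a n * R' ^ n))
    (hA : ∑' n : ℕ, a n * R ^ n = 1)
    (hgcd : ∀ d : ℕ, (∀ n, 0 < a n → d ∣ n) → d = 1) :
    ∀ z : ℂ, ‖z‖ ≤ R → z ≠ (R : ℂ) → (∑' n : ℕ, (a n : ℂ) * z ^ n) ≠ 1 := by
  intro z hz hzR hcontra
  obtain ⟨R', hRR', hsumR'⟩ := hRa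
  have hsumR : Summable (fun n => a n * R ^ n) :=
    hsumR'.of_nonneg_of_le (fun n => mul_nonneg (ha n) (pow_nonneg hR.le n))
      (fun n => mul_le_mul_of_nonneg_left (pow_le_pow_left₀ hR.le hRR'.le n) (ha n))
  have hnormz : ∀ n : ℕ, ‖(a n : ℂ) * z ^ n‖ = a n * ‖z‖ ^ n := by
    intro n
    rw [norm_mul, norm_pow, Complex.norm_real, Real.norm_of_nonneg (ha n)]
  have hnormle : ∀ n : ℕ, ‖(a n : ℂ) * z ^ n‖ ≤ a n * R ^ n := by
    intro n
    rw [hnormz]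
    exact mul_le_mul_of_nonneg_left (pow_le_pow_left₀ (norm_nonneg z) hz n) (ha n)
  have hsumz : Summable (fun n : ℕ => (a n : ℂ) * z ^ n) :=
    Summable.of_norm (hsumR.of_nonneg_of_le (fun n => norm_nonneg _) hnormle)
  -- take real parts
  have hre : ∑' n : ℕ, a n * (z ^ n).re = 1 := by
    have h := Complex.re_tsum hsumz
    rw [hcontra] at h
    simp only [Complex.one_re, Complex.mul_re, Complex.ofReal_re, Complex.ofReal_im,
      zero_mul, sub_zero] at h
    exact h.symm
  have hsumre : Summable (fun n : ℕ => a n * (z ^ n).re) := by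
    have := (Complex.hasSum_re hsumz.hasSum).summable
    simpa [Complex.mul_re] using this
  have hdiff : ∀ n : ℕ, 0 ≤ a n * R ^ n - a n * (z ^ n).re := by
    intro n
    have h1 : (z ^ n).re ≤ R ^ n := by
      calc (z ^ n).re ≤ ‖z ^ n‖ := Complex.re_le_norm _
        _ ≤ R ^ n := by rw [norm_pow]; exact pow_le_pow_left₀ (norm_nonneg z) hz n
    nlinarith [ha n]
  have hsumdiff : Summable (fun n : ℕ => a n * R ^ n - a n * (z ^ n).re) :=
    hsumR.sub hsumre
  have htsum0 : ∑' n : ℕ, (a n * R ^ n - a n * (z ^ n).re) = 0 := by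
    rw [Summable.tsum_sub hsumR hsumre, hA, hre, sub_self]
  have hzero : ∀ n : ℕ, a n * R ^ n - a n * (z ^ n).re = 0 := fun n =>
    le_antisymm (htsum0 ▸ Summable.le_tsum hsumdiff n (fun i _ => hdiff i)) (hdiff n)
  -- key: z ^ n = R ^ n on the support
  have hkey : ∀ n, 0 < a n → z ^ n = (R : ℂ) ^ n := by
    intro n hn
    have h1 : (z ^ n).re = R ^ n := by
      have h := hzero n
      have : a n * (R ^ n - (z ^ n).re) = 0 := by linarith
      rcases mul_eq_zero.mp this with h' | h'
      · exact absurd h' hn.ne'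
      · linarith
    have h2 : ‖z ^ n‖ ≤ R ^ n := by
      rw [norm_pow]; exact pow_le_pow_left₀ (norm_nonneg z) hz n
    have h3 : ‖z ^ n‖ = (z ^ n).re :=
      le_antisymm (h1 ▸ h2) (Complex.re_le_norm _)
    have him : (z ^ n).im = 0 := by
      have hsq := Complex.sq_norm (z ^ n)
      rw [h3, Complex.normSq_apply] at hsq
      nlinarith [sq_nonneg ((z ^ n).im)]
    rw [← Complex.ofReal_pow]
    exact Complex.ext (by rw [h1, Complex.ofReal_re]) (by rw [him, Complex.ofReal_im])
  -- support nonempty; z ≠ 0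
  have hne : ∃ n, 0 < a n := by
    by_contra h
    push_neg at h
    have := hgcd 0 (fun n hn => absurd hn (not_lt.mpr (h n)))
    exact absurd this (by norm_num)
  obtain ⟨n0, hn0⟩ := hne
  have hRne : (R : ℂ) ≠ 0 := by exact_mod_cast hR.ne'
  have hn0z : z ≠ 0 := by
    intro hz0
    have hn0ne : n0 ≠ 0 := fun h => by rw [h] at hn0; exact absurd ha0 hn0.ne'
    have h := hkey n0 hn0
    rw [hz0, zero_pow hn0ne] at h
    exact pow_ne_zero n0 hRne h.symm
  -- the "rotation" u
  set u : ℂ := z / (R : ℂ) with hu_def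
  have hu0 : u ≠ 0 := div_ne_zero hn0z hRne
  have hu1 : u ≠ 1 := by
    intro h
    exact hzR (by rw [hu_def, div_eq_one_iff_eq hRne] at h; exact h)
  have hun : ∀ n, 0 < a n → u ^ n = 1 := by
    intro n hn
    rw [hu_def, div_pow, hkey n hn, div_self (pow_ne_zero n hRne)]
  -- subgroup of ℤ of periods
  let H : AddSubgroup ℤ :=
    { carrier := {n : ℤ | u ^ n = 1}
      zero_mem' := by simp
      add_mem' := by
        intro m n hm hn
        simp only [Set.mem_setOf_eq] at *
        rw [zpow_add₀ hu0, hm, hn, one_mul]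
      neg_mem' := by
        intro n hn
        simp only [Set.mem_setOf_eq] at *
        rw [zpow_neg, hn, inv_one] }
  obtain ⟨g, hg⟩ := Int.subgroup_cyclic H
  have hmemH : ∀ n : ℕ, 0 < a n → (n : ℤ) ∈ H := by
    intro n hn
    show u ^ (n : ℤ) = 1
    rw [zpow_natCast]
    exact hun n hn
  have hdvd : ∀ n : ℕ, 0 < a n → g.natAbs ∣ n := by
    intro n hn
    have h := hmemH n hn
    rw [hg, AddSubgroup.mem_closure_singleton] at h
    obtain ⟨k, hk⟩ := h
    have : g ∣ (n : ℤ) := ⟨k, by rw [← hk, smul_eq_mul]; ring⟩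
    exact Int.ofNat_dvd.mp ((Int.natAbs_dvd).mpr this)
  have hg1 : g.natAbs = 1 := hgcd g.natAbs hdvd
  have hgH : g ∈ H := by
    rw [hg]; exact AddSubgroup.subset_closure rfl
  have hug : u ^ g = 1 := hgH
  rcases Int.natAbs_eq_iff.mp hg1 with h | h
  · rw [h] at hug
    simp at hug
    exact hu1 hug
  · rw [h] at hug
    simp only [zpow_neg, Nat.cast_one, zpow_one, inv_eq_one] at hug
    exact hu1 hug
end

section
/- Let (s_n)_{n≥0}, (p_n)_{n≥0}, (c_n)_{n≥0} be nonnegative sequences, let ζ > 0 and c > 0, and suppose: (i) s_n = Σ_{k=1}^n p_k c_{n−k} + c_n for all n; (ii) c_n ≤ e^{−(c + 1/ζ) n} for all n (mass-gap); (iii) there exist constants 0 < A ≤ B with A e^{−n/ζ} ≤ p_n ≤ B e^{−n/ζ} for all n. Suppose additionally c_0 > 0. Then there exist constants 0 < A' ≤ B' such that A' e^{−n/ζ} ≤ s_n ≤ B' e^{−n/ζ} for all sufficiently large n. -/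
/-- Last-renewal decomposition: if `s_n = Σ_{k=1}^n p_k c_{n−k} + c_n`, the no-renewal
survival `c_n` has a mass-gap (decays at rate `c + 1/ζ`), and `p_n ≍ e^{−n/ζ}`, then
`s_n ≍ e^{−n/ζ}` for large `n` (given `c_0 > 0`). -/
theorem stmt4 (s p c : ℕ → ℝ) (ζ cg A B : ℝ)
    (hζ : 0 < ζ) (hcg : 0 < cg)
    (hs : ∀ n, 0 ≤ s n) (hpn : ∀ n, 0 ≤ p n) (hcn : ∀ n, 0 ≤ c n)
    (hrec : ∀ n : ℕ, s n = ∑ k ∈ Finset.Icc 1 n, p k * c (n - k) + c n)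
    (hmass : ∀ n : ℕ, c n ≤ Real.exp (-(cg + 1 / ζ) * n))
    (hA : 0 < A) (hAB : A ≤ B)
    (hlow : ∀ n : ℕ, A * Real.exp (-n / ζ) ≤ p n)
    (hup : ∀ n : ℕ, p n ≤ B * Real.exp (-n / ζ))
    (hc0 : 0 < c 0) :
    ∃ A' B' : ℝ, 0 < A' ∧ A' ≤ B' ∧ ∃ N : ℕ, ∀ n, N ≤ n →
      A' * Real.exp (-n / ζ) ≤ s n ∧ s n ≤ B' * Real.exp (-n / ζ) := by
  have hB : 0 < B := lt_of_lt_of_le hA hAB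
  set r := Real.exp (-cg) with hr
  have hr0 : 0 < r := Real.exp_pos _
  have hr1 : r < 1 := by
    rw [hr]
    exact Real.exp_lt_one_iff.mpr (by linarith)
  have h1r : 0 < 1 - r := by linarith
  refine ⟨min (A * c 0) 1, B / (1 - r) + 1, lt_min (by positivity) one_pos, ?_, 1, ?_⟩
  · have : 0 ≤ B / (1 - r) := le_of_lt (by positivity)
    have := min_le_right (A * c 0) 1
    linarith
  intro n hn
  have hepos : 0 < Real.exp (-(n : ℝ) / ζ) := Real.exp_pos _
  constructor
  · -- lower bound
    have hmem : n ∈ Finset.Icc 1 n := Finset.mem_Icc.mpr ⟨hn, le_refl n⟩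
    have hsum : p n * c (n - n) ≤ ∑ k ∈ Finset.Icc 1 n, p k * c (n - k) :=
      Finset.single_le_sum (fun k _ => mul_nonneg (hpn k) (hcn _)) hmem
    rw [Nat.sub_self] at hsum
    have h1 : A * Real.exp (-(n : ℝ) / ζ) * c 0 ≤ p n * c 0 :=
      mul_le_mul_of_nonneg_right (hlow n) (le_of_lt hc0)
    have h2 : min (A * c 0) 1 * Real.exp (-(n : ℝ) / ζ) ≤ A * c 0 * Real.exp (-(n : ℝ) / ζ) :=
      mul_le_mul_of_nonneg_right (min_le_left _ _) (le_of_lt hepos)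
    have := hcn n
    rw [hrec n]
    nlinarith
  · -- upper bound
    have key : ∀ k ∈ Finset.Icc 1 n, p k * c (n - k) ≤
        B * Real.exp (-(n : ℝ) / ζ) * r ^ (n - k) := by
      intro k hk
      obtain ⟨hk1, hkn⟩ := Finset.mem_Icc.mp hk
      have hcast : ((n - k : ℕ) : ℝ) = (n : ℝ) - k := by
        push_cast [Nat.cast_sub hkn]; ring
      calc p k * c (n - k)
          ≤ (B * Real.exp (-(k : ℝ) / ζ)) * Real.exp (-(cg + 1 / ζ) * ((n - k : ℕ) : ℝ)) :=
            mul_le_mul (hup k) (hmass _) (hcn _) (by positivity)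
        _ = B * Real.exp (-(n : ℝ) / ζ) * r ^ (n - k) := by
            rw [hr, ← Real.exp_nat_mul, mul_assoc, mul_assoc, ← Real.exp_add, ← Real.exp_add,
              hcast]
            congr 1
            field_simp
            ring
    have hsub : Finset.Icc 1 n ⊆ Finset.range (n + 1) := by
      intro k hk
      obtain ⟨_, hkn⟩ := Finset.mem_Icc.mp hk
      exact Finset.mem_range.mpr (Nat.lt_succ_of_le hkn)
    have hgeom : ∑ k ∈ Finset.Icc 1 n, r ^ (n - k) ≤ 1 / (1 - r) := by
      calc ∑ k ∈ Finset.Icc 1 n, r ^ (n - k)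
          ≤ ∑ k ∈ Finset.range (n + 1), r ^ (n - k) :=
            Finset.sum_le_sum_of_subset_of_nonneg hsub
              (fun k _ _ => pow_nonneg (le_of_lt hr0) _)
        _ = ∑ k ∈ Finset.range (n + 1), r ^ k := by
            have := Finset.sum_range_reflect (fun j => r ^ j) (n + 1)
            simpa using this
        _ = (r ^ (n + 1) - 1) / (r - 1) := geom_sum_eq (ne_of_lt hr1) _
        _ = (1 - r ^ (n + 1)) / (1 - r) := by
            rw [div_eq_div_iff (by linarith) (by linarith)]; ring
        _ ≤ 1 / (1 - r) := by
            gcongr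
            nlinarith [pow_nonneg hr0.le (n + 1)]
    have hce : Real.exp (-(cg + 1 / ζ) * (n : ℝ)) ≤ Real.exp (-(n : ℝ) / ζ) := by
      apply Real.exp_le_exp.mpr
      have h : -(cg + 1 / ζ) * (n : ℝ) = -(cg * n) + -(n : ℝ) / ζ := by ring
      have h2 : (0:ℝ) ≤ cg * n := mul_nonneg hcg.le (Nat.cast_nonneg n)
      linarith
    calc s n = ∑ k ∈ Finset.Icc 1 n, p k * c (n - k) + c n := hrec n
      _ ≤ (∑ k ∈ Finset.Icc 1 n, B * Real.exp (-(n : ℝ) / ζ) * r ^ (n - k))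
          + Real.exp (-(cg + 1 / ζ) * (n : ℝ)) :=
          add_le_add (Finset.sum_le_sum key) (hmass n)
      _ = B * Real.exp (-(n : ℝ) / ζ) * (∑ k ∈ Finset.Icc 1 n, r ^ (n - k))
          + Real.exp (-(cg + 1 / ζ) * (n : ℝ)) := by rw [← Finset.mul_sum]
      _ ≤ B * Real.exp (-(n : ℝ) / ζ) * (1 / (1 - r)) + Real.exp (-(n : ℝ) / ζ) :=
          add_le_add (mul_le_mul_of_nonneg_left hgeom (by positivity)) hce
      _ = (B / (1 - r) + 1) * Real.exp (-(n : ℝ) / ζ) := by ring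
end

section
/- Let (u_k)_{k≥1} be a sequence in [0,1] satisfying u_1 ≥ δ for some δ > 0 and, for all k ≥ 1, u_{k+1} ≥ (1 − e^{−c₀ 2^k})² (1 − (1 − u_k)²) for some constant c₀ > 0. Then there exists c₁ > 0 (depending only on δ and c₀) such that u_k ≥ 1 − e^{−c₁ 2^k} for all k ≥ 1. -/
set_option maxHeartbeats 1000000 in
/-- Two-scale recursion: if `u_1 ≥ δ > 0` and
`u_{k+1} ≥ (1 − e^{−c₀ 2^k})² (1 − (1 − u_k)²)` for all `k ≥ 1`, then there is `c₁ > 0`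
with `u_k ≥ 1 − e^{−c₁ 2^k}` for all `k ≥ 1`. -/
theorem stmt9 (u : ℕ → ℝ) (δ c₀ : ℝ) (hδ : 0 < δ) (hc₀ : 0 < c₀)
    (hmem : ∀ k, 1 ≤ k → u k ∈ Set.Icc (0 : ℝ) 1)
    (h1 : δ ≤ u 1)
    (hrec : ∀ k : ℕ, 1 ≤ k →
      (1 - Real.exp (-c₀ * 2 ^ k)) ^ 2 * (1 - (1 - u k) ^ 2) ≤ u (k + 1)) :
    ∃ c₁ : ℝ, 0 < c₁ ∧ ∀ k : ℕ, 1 ≤ k → 1 - Real.exp (-c₁ * 2 ^ k) ≤ u k := by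
  have hεpos : ∀ k : ℕ, 0 < Real.exp (-c₀ * 2 ^ k) := fun k => Real.exp_pos _
  have hεlt1 : ∀ k : ℕ, 1 ≤ k → Real.exp (-c₀ * 2 ^ k) < 1 := by
    intro k hk
    rw [Real.exp_lt_one_iff]
    have : (0:ℝ) < 2 ^ k := by positivity
    nlinarith
  -- positivity of u
  have hpos : ∀ k : ℕ, 1 ≤ k → 0 < u k := by
    intro k hk
    induction k, hk using Nat.le_induction with
    | base => exact lt_of_lt_of_le hδ h1
    | succ n hn ih =>
      have h0 := ih
      have hu0 := (hmem n hn).1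
      have hu1 := (hmem n hn).2
      have hε := hεlt1 n hn
      have hεp := hεpos n
      have hr := hrec n hn
      have ha : 0 < (1 - Real.exp (-c₀ * 2 ^ n)) ^ 2 := pow_pos (by linarith) 2
      have hb : 0 < 1 - (1 - u n) ^ 2 := by nlinarith
      nlinarith [mul_pos ha hb]
  -- key one-step bound: v_{k+1} ≤ v_k^2 + 2 ε_k
  have hstep : ∀ k : ℕ, 1 ≤ k →
      1 - u (k + 1) ≤ (1 - u k) ^ 2 + 2 * Real.exp (-c₀ * 2 ^ k) := by
    intro k hk
    have hu0 := (hmem k hk).1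
    have hu1 := (hmem k hk).2
    have hε := hεlt1 k hk
    have hεp := hεpos k
    have hr := hrec k hk
    nlinarith [sq_nonneg (1 - u k), sq_nonneg (Real.exp (-c₀ * 2 ^ k)),
      mul_nonneg (le_of_lt hεp) (sq_nonneg (1 - u k))]
  -- choose K₁ with c₀ * 2 ^ K₁ ≥ 99
  obtain ⟨m, hm⟩ := pow_unbounded_of_one_lt (99 / c₀) (one_lt_two (α := ℝ))
  set K₁ : ℕ := max m 1 with hK₁def
  have hK₁1 : 1 ≤ K₁ := le_max_right _ _
  have hK₁big : (99 : ℝ) ≤ c₀ * 2 ^ K₁ := by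
    have h2 : (2:ℝ) ^ m ≤ 2 ^ K₁ := by
      apply pow_le_pow_right₀ (by norm_num) (le_max_left _ _)
    have := (div_lt_iff₀ hc₀).mp hm
    nlinarith
  have hεsmall : ∀ k : ℕ, K₁ ≤ k → Real.exp (-c₀ * 2 ^ k) ≤ 1 / 100 := by
    intro k hk
    have h2 : (2:ℝ) ^ K₁ ≤ 2 ^ k := pow_le_pow_right₀ (by norm_num) hk
    have hx : (99:ℝ) ≤ c₀ * 2 ^ k := by nlinarith
    have h1x : c₀ * 2 ^ k + 1 ≤ Real.exp (c₀ * 2 ^ k) := Real.add_one_le_exp _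
    rw [show -c₀ * 2 ^ k = -(c₀ * 2 ^ k) by ring, Real.exp_neg]
    rw [inv_le_comm₀ (by positivity) (by norm_num)]
    linarith
  -- growth: while u ≤ 3/4 (for k ≥ K₁), u grows by factor 6/5
  have hgrow : ∀ k : ℕ, K₁ ≤ k → u k ≤ 3 / 4 → 6 / 5 * u k ≤ u (k + 1) := by
    intro k hk hu34
    have hk1 : 1 ≤ k := le_trans hK₁1 hk
    have hu0 := hpos k hk1
    have hε := hεsmall k hk
    have hεp := hεpos k
    have hr := hrec k hk1
    have hu1 := (hmem k hk1).2
    have ha : ((99:ℝ)/100)^2 ≤ (1 - Real.exp (-c₀ * 2 ^ k))^2 := by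
      apply pow_le_pow_left₀ (by norm_num) (by linarith)
    have hb : 5/4 * u k ≤ 1 - (1 - u k)^2 := by nlinarith
    have := mul_le_mul ha hb (by positivity) (by positivity)
    nlinarith
  -- persistence: once u ≥ 3/4 (for k ≥ K₁), it stays ≥ 3/4
  have hpersist : ∀ k : ℕ, K₁ ≤ k → 3 / 4 ≤ u k → 3 / 4 ≤ u (k + 1) := by
    intro k hk hu34
    have hk1 : 1 ≤ k := le_trans hK₁1 hk
    have hu1 := (hmem k hk1).2
    have hε := hεsmall k hk
    have hεp := hεpos k
    have hr := hrec k hk1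
    have ha : ((99:ℝ)/100)^2 ≤ (1 - Real.exp (-c₀ * 2 ^ k))^2 := by
      apply pow_le_pow_left₀ (by norm_num) (by linarith)
    have hb : (15:ℝ)/16 ≤ 1 - (1 - u k)^2 := by nlinarith
    have := mul_le_mul ha hb (by norm_num) (by positivity)
    nlinarith
  -- while below 3/4, geometric growth
  have hδ₁ : 0 < u K₁ := hpos K₁ hK₁1
  have hgrowth : ∀ n : ℕ, (∀ j : ℕ, j ≤ n → u (K₁ + j) < 3 / 4) →
      (6 / 5 : ℝ) ^ n * u K₁ ≤ u (K₁ + n) := by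
    intro n
    induction n with
    | zero => intro _; simp
    | succ n ih =>
      intro h
      have ih' := ih (fun j hj => h j (le_trans hj (Nat.le_succ n)))
      have hlt := h n (Nat.le_succ n)
      have hg := hgrow (K₁ + n) (Nat.le_add_right _ _) (le_of_lt hlt)
      have hpow : (0:ℝ) < (6/5:ℝ) ^ n := by positivity
      calc (6 / 5 : ℝ) ^ (n+1) * u K₁ = 6 / 5 * ((6/5:ℝ)^n * u K₁) := by ring
        _ ≤ 6 / 5 * u (K₁ + n) := by nlinarith
        _ ≤ u (K₁ + n + 1) := hg
  -- find a point where u ≥ 3/4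
  obtain ⟨n₀, hn₀⟩ := pow_unbounded_of_one_lt (1 / u K₁) (by norm_num : (1:ℝ) < 6/5)
  have hex : ∃ j : ℕ, j ≤ n₀ ∧ 3 / 4 ≤ u (K₁ + j) := by
    by_contra hcon
    push_neg at hcon
    have := hgrowth n₀ (fun j hj => hcon j hj)
    have hu1 := (hmem (K₁ + n₀) (le_trans hK₁1 (Nat.le_add_right _ _))).2
    have : (1:ℝ) < (6/5:ℝ)^n₀ * u K₁ := by
      have := (div_lt_iff₀ hδ₁).mp hn₀
      nlinarith
    linarith
  obtain ⟨j₀, _, hj₀⟩ := hex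
  set K₂ : ℕ := K₁ + j₀ with hK₂def
  have hK₂K₁ : K₁ ≤ K₂ := Nat.le_add_right _ _
  have hK₂1 : 1 ≤ K₂ := le_trans hK₁1 hK₂K₁
  -- for all k ≥ K₂, u k ≥ 3/4
  have htail34 : ∀ k : ℕ, K₂ ≤ k → 3 / 4 ≤ u k := by
    intro k hk
    induction k, hk using Nat.le_induction with
    | base => exact hj₀
    | succ n hn ih => exact hpersist n (le_trans hK₂K₁ hn) ih
  -- choose c₁
  have hρex : ∃ ρ : ℝ, 0 < ρ ∧ ρ ≤ 1 ∧ ∀ k : ℕ, 1 ≤ k → k ≤ K₂ → ρ ≤ u k := by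
    obtain ⟨k₀, hk₀mem, hk₀min⟩ := Finset.exists_min_image (Finset.Icc 1 K₂) u
      ⟨1, Finset.mem_Icc.mpr ⟨le_refl 1, hK₂1⟩⟩
    obtain ⟨hk₀1, hk₀2⟩ := Finset.mem_Icc.mp hk₀mem
    refine ⟨u k₀, hpos k₀ hk₀1, (hmem k₀ hk₀1).2, fun k h1k h2k =>
      hk₀min k (Finset.mem_Icc.mpr ⟨h1k, h2k⟩)⟩
  obtain ⟨ρ, hρ0, hρ1, hρ⟩ := hρex
  have h1ρ : (0:ℝ) < 1 - ρ / 2 := by linarith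
  have h1ρ' : 1 - ρ / 2 < 1 := by linarith
  set t : ℝ := -Real.log (1 - ρ / 2) with htdef
  have ht0 : 0 < t := by
    have := Real.log_neg h1ρ h1ρ'
    simp only [htdef]
    linarith
  set c₁ : ℝ := min (c₀ / 4) (min t (Real.log 2) / 2 ^ K₂) with hc₁def
  have hlog2 : (0:ℝ) < Real.log 2 := Real.log_pos (by norm_num)
  have hc₁0 : 0 < c₁ := by
    apply lt_min (by linarith)
    apply div_pos (lt_min ht0 hlog2) (by positivity)
  refine ⟨c₁, hc₁0, ?_⟩
  -- bound for k ≤ K₂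
  have hsmallk : ∀ k : ℕ, 1 ≤ k → k ≤ K₂ → 1 - Real.exp (-c₁ * 2 ^ k) ≤ u k := by
    intro k h1k h2k
    have h2pow : (2:ℝ) ^ k ≤ 2 ^ K₂ := pow_le_pow_right₀ (by norm_num) h2k
    have hc₁t : c₁ * 2 ^ k ≤ t := by
      have : c₁ ≤ min t (Real.log 2) / 2 ^ K₂ := min_le_right _ _
      have hmt : min t (Real.log 2) ≤ t := min_le_left _ _
      have h2K : (0:ℝ) < 2 ^ K₂ := by positivity
      have : c₁ * 2 ^ k ≤ (min t (Real.log 2) / 2 ^ K₂) * 2 ^ K₂ := by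
        apply mul_le_mul this h2pow (by positivity)
        positivity
      rw [div_mul_cancel₀] at this
      · linarith
      · positivity
    have : Real.exp (-t) ≤ Real.exp (-c₁ * 2 ^ k) := by
      apply Real.exp_le_exp.mpr; linarith
    have hexpt : Real.exp (-t) = 1 - ρ / 2 := by
      rw [htdef, neg_neg, Real.exp_log h1ρ]
    have := hρ k h1k h2k
    linarith [this, hexpt ▸ ‹Real.exp (-t) ≤ Real.exp (-c₁ * 2 ^ k)›]
  -- tail induction: v_{K₂+m} ≤ (1/2) exp(-c₁ 2^(K₂+m))
  have htail : ∀ k : ℕ, K₂ ≤ k → 1 - u k ≤ 1 / 2 * Real.exp (-c₁ * 2 ^ k) := by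
    intro k hk
    induction k, hk using Nat.le_induction with
    | base =>
      have hb : 1 - u K₂ ≤ 1 / 4 := by linarith [hj₀]
      have hexp : Real.exp (-Real.log 2) ≤ Real.exp (-c₁ * 2 ^ K₂) := by
        apply Real.exp_le_exp.mpr
        have : c₁ ≤ min t (Real.log 2) / 2 ^ K₂ := min_le_right _ _
        have hmt : min t (Real.log 2) ≤ Real.log 2 := min_le_right _ _
        have h2K : (0:ℝ) < 2 ^ K₂ := by positivity
        have h1 : c₁ * 2 ^ K₂ ≤ (min t (Real.log 2) / 2 ^ K₂) * 2 ^ K₂ :=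
          mul_le_mul_of_nonneg_right this (le_of_lt h2K)
        rw [div_mul_cancel₀ _ (ne_of_gt h2K)] at h1
        linarith
      have : Real.exp (-Real.log 2) = 1 / 2 := by
        rw [Real.exp_neg, Real.exp_log (by norm_num : (0:ℝ) < 2)]; norm_num
      rw [this] at hexp
      linarith
    | succ n hn ih =>
      have hn1 : 1 ≤ n := le_trans hK₂1 hn
      have hv := hstep n hn1
      have hv0 : 0 ≤ 1 - u n := by linarith [(hmem n hn1).2]
      -- v_n ≤ (1/2) e^{-c₁ 2^n}
      have hsq : (1 - u n) ^ 2 ≤ 1 / 4 * Real.exp (-c₁ * 2 ^ (n+1)) := by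
        have h2 : Real.exp (-c₁ * 2 ^ n) ^ 2 = Real.exp (-c₁ * 2 ^ (n+1)) := by
          rw [← Real.exp_nat_mul]
          congr 1
          push_cast
          ring
        have := sq_nonneg (Real.exp (-c₁ * 2 ^ n))
        nlinarith [Real.exp_pos (-c₁ * 2 ^ n)]
      -- error term
      have herr : 2 * Real.exp (-c₀ * 2 ^ n) ≤ 1 / 4 * Real.exp (-c₁ * 2 ^ (n+1)) := by
        have hc₁c₀ : c₁ ≤ c₀ / 4 := min_le_left _ _
        have h2n : (2:ℝ) ^ K₁ ≤ 2 ^ n := pow_le_pow_right₀ (by norm_num)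
          (le_trans hK₂K₁ hn)
        have hx : (99:ℝ) ≤ c₀ * 2 ^ n := by nlinarith
        have hkey : c₁ * 2 ^ (n+1) ≤ c₀ / 2 * 2 ^ n := by
          have : (2:ℝ) ^ (n+1) = 2 * 2 ^ n := by ring
          rw [this]
          have h2n0 : (0:ℝ) < 2 ^ n := by positivity
          nlinarith
        have hmono : Real.exp (-(c₀ / 2 * 2 ^ n)) ≤ Real.exp (-c₁ * 2 ^ (n+1)) := by
          apply Real.exp_le_exp.mpr; linarith
        -- need 2 e^{-c₀ 2^n} ≤ (1/4) e^{-(c₀/2) 2^n}, i.e. e^{(c₀/2) 2^n} ≥ 8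
        have hhalf : Real.exp (c₀ / 2 * 2 ^ n) ≥ 8 := by
          have := Real.add_one_le_exp (c₀ / 2 * 2 ^ n)
          nlinarith
        have hsplit : Real.exp (-c₀ * 2 ^ n) =
            Real.exp (-(c₀ / 2 * 2 ^ n)) * Real.exp (-(c₀ / 2 * 2 ^ n)) := by
          rw [← Real.exp_add]; ring_nf
        have hebd : Real.exp (-(c₀ / 2 * 2 ^ n)) ≤ 1 / 8 := by
          rw [Real.exp_neg, inv_le_comm₀ (Real.exp_pos _) (by norm_num)]
          norm_num at hhalf ⊢
          linarith
        have hep : 0 < Real.exp (-(c₀ / 2 * 2 ^ n)) := Real.exp_pos _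
        calc 2 * Real.exp (-c₀ * 2 ^ n)
            = 2 * (Real.exp (-(c₀ / 2 * 2 ^ n)) * Real.exp (-(c₀ / 2 * 2 ^ n))) := by
              rw [hsplit]
          _ ≤ 2 * (1 / 8 * Real.exp (-(c₀ / 2 * 2 ^ n))) := by nlinarith
          _ = 1 / 4 * Real.exp (-(c₀ / 2 * 2 ^ n)) := by ring
          _ ≤ 1 / 4 * Real.exp (-c₁ * 2 ^ (n+1)) := by linarith
      linarith
  -- conclude
  intro k hk
  rcases le_or_gt k K₂ with h | h
  · exact hsmallk k hk h
  · have := htail k (le_of_lt h)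
    have hep : 0 < Real.exp (-c₁ * 2 ^ k) := Real.exp_pos _
    linarith
end
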